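/- arXiv:0705.2995 — 5 statements merged into one kernel-verified Lean document; each statement's English description precedes it below -/
import Mathlib

section
/- Let Z be a countable set of complex numbers with coefficients c_z and radii d_z > 0, the disks B(z, d_z) pairwise disjoint, with only finitely many z ∈ Z in any bounded disk, and suppose Σ_{z∈Z} |c_z|/d_z < ∞. Then G'(s) := Σ_{z∈Z, |s−z|≥d_z} |c_z|/|s − z| converges uniformly to 0 as |s| → ∞; i.e., for every ε > 0 there is R such that G'(s) < ε whenever |s| ≥ R. -/
/-!
Each summand is dominated by `|c_z| / d_z` and tends to `0` as `|s| → ∞`, so by Tannery's theorem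
(dominated convergence for sums) the whole sum tends to `0` along the cobounded filter.
-/

open Metric Filter Topology Bornology

lemma abs_ite_le_div_le_abs_div {a r t : ℝ} (hr : 0 < r) :
    |if r ≤ t then a / t else 0| ≤ |a / r| := by
  split_ifs with hrt
  · rw [abs_div, abs_div, abs_of_pos hr, abs_of_pos (hr.trans_le hrt)]
    exact div_le_div_of_nonneg_left (abs_nonneg a) hr hrt
  · simp only [abs_zero, abs_nonneg]

lemma tendsto_ite_le_div_atTop_nhds_zero (a r : ℝ) :
    Tendsto (fun t : ℝ => if r ≤ t then a / t else 0) atTop (𝓝 0) :=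
  (tendsto_const_nhds.div_atTop tendsto_id).congr' <|
    (eventually_ge_atTop r).mono fun _ hrt => (if_pos hrt).symm

theorem tendsto_tsum_ite_le_div_norm_sub_cobounded {E ι : Type*} [SeminormedAddCommGroup E]
    (p : ι → E) (a r : ι → ℝ) (hr : ∀ i, 0 < r i) (hsum : Summable fun i => a i / r i) :
    Tendsto (fun s => ∑' i, if r i ≤ ‖s - p i‖ then a i / ‖s - p i‖ else 0)
      (cobounded E) (𝓝 0) := by
  have h := tendsto_tsum_of_dominated_convergence hsum.abs
    (fun i => (tendsto_ite_le_div_atTop_nhds_zero (a i) (r i)).comp <|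
      tendsto_norm_cobounded_atTop.comp (tendsto_sub_const_cobounded (p i)))
    (Eventually.of_forall fun _ i => abs_ite_le_div_le_abs_div (hr i))
  rwa [tsum_zero] at h

theorem partial_fraction_vanishing_at_infinity_general
    (Z : Set ℂ)
    (c : ℂ → ℂ) (d : ℂ → ℝ)
    (hd : ∀ z ∈ Z, 0 < d z)
    (hsum : Summable fun z : Z => ‖c z.1‖ / d z.1) :
    ∀ ε > 0, ∃ R : ℝ, ∀ s : ℂ, R ≤ ‖s‖ →
      (∑' z : Z, if d z.1 ≤ ‖s - z.1‖ then ‖c z.1‖ / ‖s - z.1‖ else 0) < ε := by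
  intro ε hε
  have hlim := tendsto_tsum_ite_le_div_norm_sub_cobounded (E := ℂ) Subtype.val
    (fun z : Z => ‖c z‖) (fun z : Z => d z) (fun z => hd z z.2) hsum
  obtain ⟨R, -, hR⟩ :=
    hasBasis_cobounded_norm.eventually_iff.mp (hlim.eventually (gt_mem_nhds hε))
  exact ⟨R, fun s hs => hR hs⟩

theorem partial_fraction_vanishing_at_infinity
    (Z : Set ℂ) (hZc : Z.Countable)
    (hZfin : ∀ r : ℝ, 0 ≤ r → (Z ∩ closedBall 0 r).Finite)
    (c : ℂ → ℂ) (d : ℂ → ℝ)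
    (hc : ∀ z ∈ Z, c z ≠ 0)
    (hd : ∀ z ∈ Z, 0 < d z)
    (hdisj : ∀ z ∈ Z, ∀ z' ∈ Z, z ≠ z' →
      Disjoint (closedBall z (d z)) (closedBall z' (d z')))
    (hsum : Summable fun z : Z => ‖c z.1‖ / d z.1) :
    ∀ ε > 0, ∃ R : ℝ, ∀ s : ℂ, R ≤ ‖s‖ →
      (∑' z : Z, if d z.1 ≤ ‖s - z.1‖ then ‖c z.1‖ / ‖s - z.1‖ else 0) < ε :=
  partial_fraction_vanishing_at_infinity_general Z c d hd hsum
end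

section
/- If t is real with |t| ≥ δ > 0, then 1/|sin(x + it)| = 2 e^{−|t|} (1 + e^{−2|t|} ε(x,t)) for some ε(x,t) satisfying −1 < ε(x,t) < 1 + 1/δ. -/
/-!
Put `u = |t|` and `q = e^{-2u}`. Since `‖sin (x + i t)‖² = sin² x + sinh² t`, the norm lies
between `sinh u` and `cosh u`, i.e. `r := 2 e^{-u} ‖sin (x + i t)‖ ∈ [1 - q, 1 + q]`.
Writing `1 / r = 1 + q ε`, these bounds give `-1 < ε ≤ 1 / (1 - q)`, and
`1 / (1 - e^{-v}) < 1 + 1 / v` for `v = 2u ≥ δ` because `1 + v < e^v`.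
-/

open Complex

theorem Complex.norm_sin_add_mul_I_sq (x y : ℝ) :
    ‖sin (x + y * I)‖ ^ 2 = Real.sin x ^ 2 + Real.sinh y ^ 2 := by
  have hsin : sin (x + y * I) =
      (Real.sin x * Real.cosh y : ℝ) + (Real.cos x * Real.sinh y : ℝ) * I := by
    rw [sin_add_mul_I]
    push_cast
    ring
  rw [hsin, Complex.sq_norm, normSq_add_mul_I]
  linear_combination Real.sin x ^ 2 * Real.cosh_sq y + Real.sinh y ^ 2 * Real.sin_sq_add_cos_sq x

theorem Complex.sinh_abs_le_norm_sin_add_mul_I (x y : ℝ) :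
    Real.sinh |y| ≤ ‖sin (x + y * I)‖ := by
  rw [← pow_le_pow_iff_left₀ (Real.sinh_nonneg_iff.2 (abs_nonneg y)) (norm_nonneg _) two_ne_zero,
    ← Real.abs_sinh, sq_abs, norm_sin_add_mul_I_sq]
  exact le_add_of_nonneg_left (sq_nonneg _)

theorem Complex.norm_sin_add_mul_I_le_cosh_abs (x y : ℝ) :
    ‖sin (x + y * I)‖ ≤ Real.cosh |y| := by
  rw [← pow_le_pow_iff_left₀ (norm_nonneg _) (Real.cosh_pos _).le two_ne_zero, Real.cosh_abs,
    Real.cosh_sq', norm_sin_add_mul_I_sq]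
  gcongr
  exact Real.sin_sq_le_one x

theorem Real.two_mul_sinh_mul_exp_neg (u : ℝ) : 2 * sinh u * exp (-u) = 1 - exp (-2 * u) := by
  rw [sinh_eq, mul_div_cancel₀ _ two_ne_zero, sub_mul, ← exp_add, ← exp_add]
  ring_nf
  rw [exp_zero]

theorem Real.two_mul_cosh_mul_exp_neg (u : ℝ) : 2 * cosh u * exp (-u) = 1 + exp (-2 * u) := by
  rw [cosh_eq, mul_div_cancel₀ _ two_ne_zero, add_mul, ← exp_add, ← exp_add]
  ring_nf
  rw [exp_zero]

theorem Complex.two_mul_norm_sin_add_mul_I_mul_exp_mem_Icc (x y : ℝ) :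
    2 * ‖sin (x + y * I)‖ * Real.exp (-|y|) ∈
      Set.Icc (1 - Real.exp (-2 * |y|)) (1 + Real.exp (-2 * |y|)) := by
  rw [← Real.two_mul_sinh_mul_exp_neg, ← Real.two_mul_cosh_mul_exp_neg]
  constructor <;> gcongr
  · exact sinh_abs_le_norm_sin_add_mul_I x y
  · exact norm_sin_add_mul_I_le_cosh_abs x y

theorem exists_one_div_eq_one_add_mul {q r : ℝ} (hq₀ : 0 < q) (hq₁ : q < 1) (hlo : 1 - q ≤ r)
    (hhi : r ≤ 1 + q) :
    ∃ ε, -1 < ε ∧ ε ≤ 1 / (1 - q) ∧ 1 / r = 1 + q * ε := by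
  have hr : 0 < r := by linarith
  refine ⟨(1 / r - 1) / q, ?_, ?_, by field_simp; ring⟩
  · have : 1 - q < 1 / r :=
      calc 1 - q < 1 / (1 + q) := by rw [lt_div_iff₀ (by linarith)]; nlinarith
        _ ≤ 1 / r := one_div_le_one_div_of_le hr hhi
    rw [lt_div_iff₀ hq₀]
    linarith
  · have : 1 / r ≤ 1 / (1 - q) := one_div_le_one_div_of_le (by linarith) hlo
    have hsplit : 1 / (1 - q) * q = 1 / (1 - q) - 1 := by
      field_simp [(by linarith : 1 - q ≠ 0)]
      ring
    rw [div_le_iff₀ hq₀, hsplit]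
    linarith

theorem Real.one_div_one_sub_exp_neg_lt {v : ℝ} (hv : 0 < v) : 1 / (1 - exp (-v)) < 1 + 1 / v := by
  have hexp : v + 1 < exp v := add_one_lt_exp hv.ne'
  have hsub : 1 - exp (-v) = (exp v - 1) / exp v := by rw [exp_neg]; field_simp
  rw [hsub, one_div_div, div_lt_iff₀ (by linarith)]
  field_simp
  nlinarith

theorem inv_abs_sin_asymptotic
    (δ : ℝ) (hδ : 0 < δ) (x t : ℝ) (ht : δ ≤ |t|) :
    ∃ ε : ℝ, -1 < ε ∧ ε < 1 + 1 / δ ∧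
      1 / ‖Complex.sin (x + t * Complex.I)‖ =
        2 * Real.exp (-|t|) * (1 + Real.exp (-2 * |t|) * ε) := by
  have ht₀ : 0 < |t| := hδ.trans_le ht
  obtain ⟨hlo, hhi⟩ := two_mul_norm_sin_add_mul_I_mul_exp_mem_Icc x t
  obtain ⟨ε, hε_gt, hε_le, hε⟩ := exists_one_div_eq_one_add_mul (Real.exp_pos _)
    (Real.exp_lt_one_iff.2 (by linarith)) hlo hhi
  refine ⟨ε, hε_gt, ?_, ?_⟩
  · calc ε ≤ 1 / (1 - Real.exp (-(2 * |t|))) := by rwa [← neg_mul]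
      _ < 1 + 1 / (2 * |t|) := Real.one_div_one_sub_exp_neg_lt (by positivity)
      _ ≤ 1 + 1 / δ := by gcongr; linarith
  · have hA : 0 < ‖sin (x + t * I)‖ :=
      (Real.sinh_pos_iff.2 ht₀).trans_le (sinh_abs_le_norm_sin_add_mul_I x t)
    rw [← hε]
    field_simp
end

section
/- Let h be analytic on an open set containing the closed disk {z : |z − z₀| ≤ ρ}, and let 0 < r < ρ. Define F_n(z) := (h(z) − Σ_{k=0}^{n−1} h^{(k)}(z₀)(z − z₀)^k / k!) / (z − z₀)^n for z ≠ z₀ and F_n(z₀) := h^{(n)}(z₀)/n!. Then for all z with |z − z₀| ≤ r, |F_n(z)| ≤ M/(ρ^{n−1}(ρ − r)), where M = max{|h(z)| : |z − z₀| = ρ}. -/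
/-! Expanding `h` in its Taylor series `∑ aₖ (z - z₀)ᵏ` on the disc of radius `ρ` gives
`F z = ∑ a_{k+n} (z - z₀)ᵏ`, and Cauchy's estimate `‖aₖ‖ ≤ M / ρᵏ` lets this series be dominated
by the geometric series `(M / ρⁿ) ∑ (r / ρ)ᵏ = M / (ρⁿ⁻¹ (ρ - r))`. -/

open Metric Nat Finset

lemma norm_le_sSup_image_norm {X E : Type*} [TopologicalSpace X] [SeminormedAddCommGroup E]
    {K : Set X} {f : X → E} (hK : IsCompact K) (hf : ContinuousOn f K) {x : X} (hx : x ∈ K) :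
    ‖f x‖ ≤ sSup ((fun y => ‖f y‖) '' K) :=
  le_csSup (hK.image_of_continuousOn hf.norm).bddAbove (Set.mem_image_of_mem _ hx)

lemma HasSum.shift_div_pow {K : Type*} [Field K] [TopologicalSpace K] [IsTopologicalRing K]
    {a : ℕ → K} {w s : K} (hs : HasSum (fun k => a k * w ^ k) s) (hw : w ≠ 0)
    (n : ℕ) :
    HasSum (fun k => a (k + n) * w ^ k) ((s - ∑ k ∈ range n, a k * w ^ k) / w ^ n) := by
  have htail := ((hasSum_nat_add_iff' n).mpr hs).div_const (w ^ n)
  convert htail using 2 with k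
  rw [pow_add]
  field_simp

lemma hasSum_shift_mul_zero_pow {K : Type*} [Semiring K] [TopologicalSpace K] (a : ℕ → K)
    (n : ℕ) : HasSum (fun k => a (k + n) * 0 ^ k) (a n) := by
  convert hasSum_single (f := fun k => a (k + n) * 0 ^ k) 0 fun k hk => by simp [hk] using 1
  simp

lemma norm_le_of_hasSum_shift_of_norm_coeff_le {K : Type*} [NormedField K] {a : ℕ → K}
    {w s : K} {C R r : ℝ} {n : ℕ} (hn : 1 ≤ n) (ha : ∀ k, ‖a k‖ ≤ C / R ^ k) (hw : ‖w‖ ≤ r)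
    (hrR : r < R) (hs : HasSum (fun k => a (k + n) * w ^ k) s) :
    ‖s‖ ≤ C / (R ^ (n - 1) * (R - r)) := by
  have hr : 0 ≤ r := (norm_nonneg w).trans hw
  have hR : 0 < R := hr.trans_lt hrR
  have hgeom : HasSum (fun k : ℕ => C / R ^ n * (r / R) ^ k) (C / R ^ n * (1 - r / R)⁻¹) :=
    (hasSum_geometric_of_lt_one (by positivity) ((div_lt_one hR).mpr hrR)).mul_left _
  have hterm (k : ℕ) : ‖a (k + n) * w ^ k‖ ≤ C / R ^ n * (r / R) ^ k := calc
    ‖a (k + n) * w ^ k‖ ≤ C / R ^ (k + n) * r ^ k := by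
      rw [norm_mul, norm_pow]
      exact mul_le_mul (ha _) (pow_le_pow_left₀ (norm_nonneg _) hw k) (by positivity)
        ((norm_nonneg _).trans (ha _))
    _ = C / R ^ n * (r / R) ^ k := by rw [pow_add, div_pow]; ring
  refine (hs.norm_le_of_bounded hgeom hterm).trans_eq ?_
  obtain ⟨m, rfl⟩ := Nat.exists_eq_add_of_le' hn
  have hRr : R - r ≠ 0 := sub_ne_zero.mpr hrR.ne'
  simp only [Nat.add_sub_cancel, pow_succ]
  field_simp

section Taylor

variable {f : ℂ → ℂ} {c : ℂ} {R : ℝ}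

lemma hasSum_iteratedDeriv_div_factorial_mul_pow (hf : DifferentiableOn ℂ f (ball c R))
    {z : ℂ} (hz : z ∈ ball c R) :
    HasSum (fun k => iteratedDeriv k f c / k ! * (z - c) ^ k) (f z) := by
  have hterm (k : ℕ) : (k ! : ℂ)⁻¹ • (z - c) ^ k • iteratedDeriv k f c =
      iteratedDeriv k f c / k ! * (z - c) ^ k := by
    rw [smul_eq_mul, smul_eq_mul, div_eq_inv_mul]
    ring
  simpa only [hterm] using Complex.hasSum_taylorSeries_on_ball hf hz

lemma norm_iteratedDeriv_div_factorial_le {C : ℝ} (k : ℕ) (hR : 0 < R)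
    (hf : DiffContOnCl ℂ f (ball c R)) (hC : ∀ z ∈ sphere c R, ‖f z‖ ≤ C) :
    ‖iteratedDeriv k f c / (k ! : ℂ)‖ ≤ C / R ^ k := by
  have hk : (0 : ℝ) < k ! := mod_cast k.factorial_pos
  rw [norm_div, Complex.norm_natCast, div_le_iff₀ hk, div_mul_eq_mul_div, mul_comm C]
  exact Complex.norm_iteratedDeriv_le_of_forall_mem_sphere_norm_le k hR hf hC

end Taylor

theorem taylor_remainder_bound_general
    (U : Set ℂ) (z₀ : ℂ) (ρ r : ℝ)
    (hrρ : r < ρ)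
    (hball : closedBall z₀ ρ ⊆ U)
    (h : ℂ → ℂ) (hh : DifferentiableOn ℂ h U)
    (n : ℕ) (hn : 1 ≤ n)
    (M : ℝ) (hM : M = sSup ((fun z => ‖h z‖) '' sphere z₀ ρ))
    (F : ℂ → ℂ)
    (hF : ∀ z ≠ z₀, F z =
      (h z - ∑ k ∈ Finset.range n, (iteratedDeriv k h z₀ / (k.factorial : ℂ)) * (z - z₀) ^ k)
        / (z - z₀) ^ n)
    (hF0 : F z₀ = iteratedDeriv n h z₀ / (n.factorial : ℂ)) :
    ∀ z ∈ closedBall z₀ r, ‖F z‖ ≤ M / (ρ ^ (n - 1) * (ρ - r)) := by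
  intro z hz
  have hzr : dist z z₀ ≤ r := mem_closedBall.mp hz
  have hρ : 0 < ρ := dist_nonneg.trans_lt (hzr.trans_lt hrρ)
  have hsphere (w : ℂ) (hw : w ∈ sphere z₀ ρ) : ‖h w‖ ≤ M :=
    hM ▸ norm_le_sSup_image_norm (isCompact_sphere z₀ ρ)
      (hh.continuousOn.mono (sphere_subset_closedBall.trans hball)) hw
  have hcoeff (k : ℕ) : ‖iteratedDeriv k h z₀ / (k ! : ℂ)‖ ≤ M / ρ ^ k :=
    norm_iteratedDeriv_div_factorial_le k hρ (hh.diffContOnCl_ball hball) hsphere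
  have htaylor := hasSum_iteratedDeriv_div_factorial_mul_pow
    (hh.mono (ball_subset_closedBall.trans hball)) (mem_ball.mpr (hzr.trans_lt hrρ))
  have hremainder :
      HasSum (fun k => iteratedDeriv (k + n) h z₀ / (k + n) ! * (z - z₀) ^ k) (F z) := by
    rcases eq_or_ne z z₀ with rfl | hz₀
    · simpa [hF0] using hasSum_shift_mul_zero_pow (fun k => iteratedDeriv k h z / k !) n
    · rw [hF z hz₀]
      exact htaylor.shift_div_pow (sub_ne_zero.mpr hz₀) n
  exact norm_le_of_hasSum_shift_of_norm_coeff_le hn hcoeff (by rwa [← dist_eq_norm]) hrρ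
    hremainder

theorem taylor_remainder_bound
    (U : Set ℂ) (hU : IsOpen U) (z₀ : ℂ) (ρ r : ℝ)
    (hr : 0 < r) (hrρ : r < ρ)
    (hball : closedBall z₀ ρ ⊆ U)
    (h : ℂ → ℂ) (hh : DifferentiableOn ℂ h U)
    (n : ℕ) (hn : 1 ≤ n)
    (M : ℝ) (hM : M = sSup ((fun z => ‖h z‖) '' sphere z₀ ρ))
    (F : ℂ → ℂ)
    (hF : ∀ z ≠ z₀, F z =
      (h z - ∑ k ∈ Finset.range n, (iteratedDeriv k h z₀ / (k.factorial : ℂ)) * (z - z₀) ^ k)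
        / (z - z₀) ^ n)
    (hF0 : F z₀ = iteratedDeriv n h z₀ / (n.factorial : ℂ)) :
    ∀ z ∈ closedBall z₀ r, ‖F z‖ ≤ M / (ρ ^ (n - 1) * (ρ - r)) :=
  taylor_remainder_bound_general U z₀ ρ r hrρ hball h hh n hn M hM F hF hF0
end

section
/- Let K ≠ 0 be complex, (θ_k)_{k≥1} positive reals with Σ 1/θ_k² < ∞, and E(s) := K Π_{k≥1}(1 + (s/θ_k)²). Then for each fixed real t, the function v ↦ |E(√v + it)|^{−2} (i.e., |E(x+it)|^{−2} as a function of v = x²) is completely monotone on (0, ∞), provided E(x + it) ≠ 0 for all x > 0. -/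
/-!
For `x = √v` every factor satisfies `|1 + ((x + it)/θ)²|² = (v + (θ - t)²)(v + (θ + t)²)/θ⁴`,
so `f(v) = |E(√v + it)|⁻² = |K|⁻² exp(-S(v))` with
`S(v) = Σ log((v + (θ_k - t)²)(v + (θ_k + t)²)/θ_k⁴)`. The derivative
`S' = Σ ((v + (θ_k - t)²)⁻¹ + (v + (θ_k + t)²)⁻¹)` is a Stieltjes-type sum whose signed
derivatives `T_i = (-1)^i S^(i+1)` are all nonnegative. Differentiating `f' = -T_0 f` with
Leibniz' rule expresses `(-1)^(j+1) f^(j+1)` as a nonnegative combination of the products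
`T_i · (-1)^(j-i) f^(j-i)`, and induction on `j` gives complete monotonicity.
-/

open Finset Filter Real Topology
open scoped Nat

structure IsCompletelyMonotoneChain (s : Set ℝ) (F : ℕ → ℝ → ℝ) : Prop where
  nonneg : ∀ j, ∀ v ∈ s, 0 ≤ F j v
  hasDerivAt : ∀ j, ∀ v ∈ s, HasDerivAt (F j) (-F (j + 1) v) v

namespace IsCompletelyMonotoneChain

variable {s : Set ℝ} {F G : ℕ → ℝ → ℝ}

theorem iteratedDeriv_eq (hF : IsCompletelyMonotoneChain s F) (hs : IsOpen s) (j : ℕ) :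
    ∀ v ∈ s, iteratedDeriv j (F 0) v = (-1) ^ j * F j v := by
  induction j with
  | zero => simp
  | succ j ih =>
    intro v hv
    have hloc : iteratedDeriv j (F 0) =ᶠ[𝓝 v] fun w => (-1) ^ j * F j w :=
      eventually_of_mem (hs.mem_nhds hv) ih
    rw [iteratedDeriv_succ, hloc.deriv_eq, ((hF.hasDerivAt j v hv).const_mul _).deriv, pow_succ]
    ring

theorem neg_one_pow_mul_iteratedDeriv_nonneg (hF : IsCompletelyMonotoneChain s F)
    (hs : IsOpen s) (j : ℕ) {v : ℝ} (hv : v ∈ s) :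
    0 ≤ (-1) ^ j * iteratedDeriv j (F 0) v := by
  rw [hF.iteratedDeriv_eq hs j v hv, ← mul_assoc, ← pow_add, Even.neg_one_pow ⟨j, rfl⟩, one_mul]
  exact hF.nonneg j v hv

theorem add (hF : IsCompletelyMonotoneChain s F) (hG : IsCompletelyMonotoneChain s G) :
    IsCompletelyMonotoneChain s (F + G) where
  nonneg j v hv := add_nonneg (hF.nonneg j v hv) (hG.nonneg j v hv)
  hasDerivAt j v hv :=
    ((hF.hasDerivAt j v hv).add (hG.hasDerivAt j v hv)).congr_deriv (neg_add _ _).symm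

end IsCompletelyMonotoneChain

/-- With `f' = -T 0 * f` and `(T i)' = -T (i + 1)`, Leibniz' rule for `f^(j+1) = -(T 0 * f)^(j)`
shows `leibnizChain f T j = (-1)^j f^(j)`. -/
noncomputable def leibnizChain (f : ℝ → ℝ) (T : ℕ → ℝ → ℝ) : ℕ → ℝ → ℝ
  | 0 => f
  | j + 1 => fun v =>
      ∑ i ∈ range (j + 1), (j.choose i : ℝ) * (T i v * leibnizChain f T (j - i) v)
  decreasing_by omega

@[simp]
theorem leibnizChain_zero (f : ℝ → ℝ) (T : ℕ → ℝ → ℝ) : leibnizChain f T 0 = f := by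
  rw [leibnizChain]

theorem isCompletelyMonotoneChain_leibnizChain {s : Set ℝ} {f : ℝ → ℝ} {T : ℕ → ℝ → ℝ}
    (hT : IsCompletelyMonotoneChain s T) (hf₀ : ∀ v ∈ s, 0 ≤ f v)
    (hf : ∀ v ∈ s, HasDerivAt f (-(T 0 v * f v)) v) :
    IsCompletelyMonotoneChain s (leibnizChain f T) := by
  refine ⟨fun j => ?_, fun j => ?_⟩ <;> induction j using Nat.strong_induction_on with
  | _ j ih => ?_
  · cases j with
    | zero => simpa [leibnizChain] using hf₀
    | succ j =>
      intro v hv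
      rw [leibnizChain]
      exact sum_nonneg fun i _ =>
        mul_nonneg (Nat.cast_nonneg _) (mul_nonneg (hT.nonneg i v hv) (ih _ (by omega) v hv))
  · intro v hv
    cases j with
    | zero => simpa [leibnizChain] using hf v hv
    | succ j =>
      have hterm : ∀ i ∈ range (j + 1), HasDerivAt
          (fun w => (j.choose i : ℝ) * (T i w * leibnizChain f T (j - i) w))
          (-((j.choose i : ℝ) * (T i v * leibnizChain f T (j + 1 - i) v)
            + (j.choose i : ℝ) * (T (i + 1) v * leibnizChain f T (j - i) v))) v := by
        intro i hi
        have hji : j - i + 1 = j + 1 - i := by simp at hi; omega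
        refine (((hT.hasDerivAt i v hv).mul (ih (j - i) (by omega) v hv)).const_mul
          (j.choose i : ℝ)).congr_deriv ?_
        rw [hji]; ring
      rw [leibnizChain]
      refine (HasDerivAt.fun_sum hterm).congr_deriv ?_
      rw [sum_neg_distrib, sum_add_distrib, leibnizChain, ← sum_choose_succ_mul
        (fun i l => T i v * leibnizChain f T l v)]

theorem neg_one_pow_mul_iteratedDeriv_nonneg_of_eqOn_exp_neg {s : Set ℝ} (hs : IsOpen s)
    {T : ℕ → ℝ → ℝ} (hT : IsCompletelyMonotoneChain s T) {S f : ℝ → ℝ} {C : ℝ} (hC : 0 ≤ C)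
    (hS : ∀ v ∈ s, HasDerivAt S (T 0 v) v) (hf : Set.EqOn f (fun v => C * exp (-S v)) s)
    (j : ℕ) {v : ℝ} (hv : v ∈ s) : 0 ≤ (-1) ^ j * iteratedDeriv j f v := by
  have hf₀ : ∀ v ∈ s, 0 ≤ f v := fun v hv => by rw [hf hv]; positivity
  have hf' : ∀ v ∈ s, HasDerivAt f (-(T 0 v * f v)) v := fun v hv => by
    refine (((hS v hv).neg.exp.const_mul C).congr_of_eventuallyEq
      (eventually_of_mem (hs.mem_nhds hv) hf)).congr_deriv ?_
    rw [hf hv, Pi.neg_apply]; ring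
  simpa using
    (isCompletelyMonotoneChain_leibnizChain hT hf₀ hf').neg_one_pow_mul_iteratedDeriv_nonneg hs j hv

noncomputable def stieltjesChain {ι : Type*} (a : ι → ℝ) (i : ℕ) (w : ℝ) : ℝ :=
  ∑' k, i ! * ((w + a k) ^ (i + 1))⁻¹

theorem inv_pow_succ_add_le {ε y c : ℝ} (hε : 0 < ε) (hy : ε ≤ y) (hc : 0 ≤ c) (n : ℕ) :
    ((y + c) ^ (n + 1))⁻¹ ≤ (ε ^ n)⁻¹ * (ε + c)⁻¹ := by
  rw [← mul_inv, pow_succ]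
  exact inv_anti₀ (by positivity) (mul_le_mul (pow_le_pow_left₀ hε.le (by linarith) n)
    (by linarith) (by linarith) (pow_nonneg (by linarith) n))

theorem hasDerivAt_factorial_mul_inv_pow_add (c : ℝ) {y : ℝ} (hy : y + c ≠ 0) (n : ℕ) :
    HasDerivAt (fun w => n ! * ((w + c) ^ (n + 1))⁻¹)
      (-((n + 1)! * ((y + c) ^ (n + 1 + 1))⁻¹)) y := by
  refine ((((hasDerivAt_id y).add_const c).pow (n + 1)).inv
    (pow_ne_zero _ hy)).const_mul (n ! : ℝ) |>.congr_deriv ?_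
  simp only [id, Pi.pow_apply, Nat.factorial_succ]
  field_simp
  push_cast
  ring

section Stieltjes

variable {ι : Type*} {a : ι → ℝ}

theorem summable_inv_pow_succ_add (ha : ∀ k, 0 ≤ a k)
    (hsum : ∀ ε > 0, Summable fun k => (ε + a k)⁻¹) {y : ℝ} (hy : 0 < y) (n : ℕ) :
    Summable fun k => ((y + a k) ^ (n + 1))⁻¹ :=
  ((hsum y hy).mul_left (y ^ n)⁻¹).of_nonneg_of_le (fun k => by have := ha k; positivity)
    fun k => inv_pow_succ_add_le hy le_rfl (ha k) n

theorem isCompletelyMonotoneChain_stieltjesChain (ha : ∀ k, 0 ≤ a k)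
    (hsum : ∀ ε > 0, Summable fun k => (ε + a k)⁻¹) :
    IsCompletelyMonotoneChain (Set.Ioi 0) (stieltjesChain a) where
  nonneg i v hv := tsum_nonneg fun k => by
    have := ha k; have : 0 < v := hv; positivity
  hasDerivAt i v hv := by
    have hv' : 0 < v := hv
    have hv2 : 0 < v / 2 := half_pos hv'
    have := hasDerivAt_tsum_of_isPreconnected
      (u := fun k => (i + 1)! * (((v / 2) ^ (i + 1))⁻¹ * (v / 2 + a k)⁻¹))
      (g := fun k w => i ! * ((w + a k) ^ (i + 1))⁻¹)
      (g' := fun k w => -((i + 1)! * ((w + a k) ^ (i + 1 + 1))⁻¹))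
      (((hsum _ hv2).mul_left _).mul_left _) isOpen_Ioi isPreconnected_Ioi
      (fun k y hy => hasDerivAt_factorial_mul_inv_pow_add (a k)
        (show 0 < y + a k by have := ha k; have : v / 2 < y := hy; linarith).ne' i)
      (fun k y hy => by
        have := ha k; have hy' : v / 2 < y := hy
        have : 0 < y + a k := by linarith
        rw [norm_neg, Real.norm_of_nonneg (by positivity)]
        gcongr
        exact inv_pow_succ_add_le hv2 hy'.le (ha k) (i + 1))
      (show v / 2 < v by linarith)
      (((summable_inv_pow_succ_add ha hsum hv i).mul_left (i ! : ℝ)))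
      (show v / 2 < v by linarith)
    rw [tsum_neg] at this
    exact this

theorem hasDerivAt_tsum_log_mul_div {b d : ι → ℝ} (ha : ∀ k, 0 ≤ a k) (hb : ∀ k, 0 ≤ b k)
    (hsa : ∀ ε > 0, Summable fun k => (ε + a k)⁻¹) (hsb : ∀ ε > 0, Summable fun k => (ε + b k)⁻¹)
    (hd : ∀ k, d k ≠ 0) {v : ℝ} (hv : 0 < v)
    (hlog : Summable fun k => log ((v + a k) * (v + b k) / d k)) :
    HasDerivAt (fun w => ∑' k, log ((w + a k) * (w + b k) / d k))
      (stieltjesChain a 0 v + stieltjesChain b 0 v) v := by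
  have hv2 : 0 < v / 2 := half_pos hv
  have := hasDerivAt_tsum_of_isPreconnected
    (u := fun k => (v / 2 + a k)⁻¹ + (v / 2 + b k)⁻¹)
    (g := fun k w => log ((w + a k) * (w + b k) / d k))
    (g' := fun k w => (w + a k)⁻¹ + (w + b k)⁻¹)
    ((hsa _ hv2).add (hsb _ hv2)) isOpen_Ioi isPreconnected_Ioi
    (fun k y hy => by
      have hy' : v / 2 < y := hy
      have hya : 0 < y + a k := by linarith [ha k]
      have hyb : 0 < y + b k := by linarith [hb k]
      refine ((((hasDerivAt_id y).add_const (a k)).mul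
        ((hasDerivAt_id y).add_const (b k))).div_const (d k)).log
        (by simp [hya.ne', hyb.ne', hd k]) |>.congr_deriv ?_
      have hdk := hd k
      simp only [id, Pi.mul_apply]
      field_simp)
    (fun k y hy => by
      have hy' : v / 2 < y := hy
      have hya : 0 < y + a k := by linarith [ha k]
      have hyb : 0 < y + b k := by linarith [hb k]
      rw [Real.norm_of_nonneg (by positivity)]
      gcongr <;> linarith [ha k, hb k])
    (show v / 2 < v by linarith) hlog (show v / 2 < v by linarith)
  simpa [stieltjesChain, (hsa v hv).tsum_add (hsb v hv)] using this

end Stieltjes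

theorem summable_inv_add_add_sq {ι : Type*} {θ : ι → ℝ} (hθ : ∀ k, θ k ≠ 0)
    (hθsum : Summable fun k => 1 / θ k ^ 2) (c : ℝ) {ε : ℝ} (hε : 0 < ε) :
    Summable fun k => (ε + (θ k + c) ^ 2)⁻¹ := by
  -- `θ² ≤ 2 (θ + c)² + 2 c²` bounds each term by `(2 + 2 c² / ε) / θ²`.
  refine (hθsum.mul_left (2 + 2 * c ^ 2 / ε)).of_nonneg_of_le (fun k => by positivity) fun k => ?_
  have hθk : 0 < θ k ^ 2 := by have := hθ k; positivity
  have hc : 2 * c ^ 2 ≤ 2 * c ^ 2 / ε * (ε + (θ k + c) ^ 2) := by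
    rw [mul_add, div_mul_cancel₀ _ hε.ne']
    have : 0 ≤ 2 * c ^ 2 / ε * (θ k + c) ^ 2 := by positivity
    linarith
  rw [one_div, ← div_eq_mul_inv, le_div_iff₀ hθk, inv_mul_eq_div, div_le_iff₀ (by positivity)]
  nlinarith [sq_nonneg (θ k + 2 * c)]

open Complex

theorem Complex.normSq_one_add_sq_div (θ x t : ℝ) (hθ : θ ≠ 0) :
    normSq (1 + ((x + t * I) / θ) ^ 2) = (x ^ 2 + (θ - t) ^ 2) * (x ^ 2 + (θ + t) ^ 2) / θ ^ 4 := by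
  have hθ' : (θ : ℂ) ≠ 0 := ofReal_ne_zero.2 hθ
  have h : 1 + ((x + t * I) / θ) ^ 2
      = (↑(θ ^ 2 + x ^ 2 - t ^ 2) + ↑(2 * x * t) * I) / ↑(θ ^ 2) := by
    field_simp
    push_cast
    ring_nf
    rw [I_sq]
    ring
  rw [h, map_div₀, normSq_add_mul_I, normSq_ofReal, div_eq_div_iff (by positivity) (by positivity)]
  ring

theorem summable_log_normSq_one_add {ι : Type*} {z : ι → ℂ} (hz : Summable fun k => ‖z k‖) :
    Summable fun k => Real.log (normSq (1 + z k)) := by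
  simpa [normSq_eq_norm_sq, Real.log_pow] using hz.summable_log_norm_one_add.mul_left 2

theorem normSq_eq_exp_tsum_log_normSq {ι : Type*} {z : ι → ℂ} {P : ℂ}
    (hz : Summable fun k => ‖z k‖) (hz₀ : ∀ k, 1 + z k ≠ 0) (hP : HasProd (fun k => 1 + z k) P) :
    normSq P = Real.exp (∑' k, Real.log (normSq (1 + z k))) :=
  (hP.map normSq continuous_normSq).unique
    (Real.hasProd_of_hasSum_log (fun k => normSq_pos.2 (hz₀ k))
      (summable_log_normSq_one_add hz).hasSum)

theorem summable_norm_div_sq {ι : Type*} {θ : ι → ℝ} (hθsum : Summable fun k => 1 / θ k ^ 2)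
    (s : ℂ) : Summable fun k => ‖(s / θ k) ^ 2‖ := by
  refine (hθsum.mul_left (‖s‖ ^ 2)).congr fun k => ?_
  rw [norm_pow, norm_div, Complex.norm_real, Real.norm_eq_abs, div_pow, sq_abs]
  ring

/-- `log ‖E (√v + t I) / K‖²`, with `x²` replaced by `v` in every factor. -/
noncomputable def logNormSqProd (θ : ℕ → ℝ) (t w : ℝ) : ℝ :=
  ∑' k, Real.log ((w + (θ k - t) ^ 2) * (w + (θ k + t) ^ 2) / θ k ^ 4)

theorem normSq_eq_exp_logNormSqProd {θ : ℕ → ℝ} (hθ : ∀ k, θ k ≠ 0)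
    (hθsum : Summable fun k => 1 / θ k ^ 2) {t v : ℝ} (hv : 0 < v) {P : ℂ}
    (hP : HasProd (fun k => 1 + ((√v + t * I) / θ k) ^ 2) P) :
    normSq P = Real.exp (logNormSqProd θ t v) := by
  have hfactor (k : ℕ) : normSq (1 + ((√v + t * I) / θ k) ^ 2)
      = (v + (θ k - t) ^ 2) * (v + (θ k + t) ^ 2) / θ k ^ 4 := by
    rw [normSq_one_add_sq_div _ _ _ (hθ k), Real.sq_sqrt hv.le]
  rw [normSq_eq_exp_tsum_log_normSq (summable_norm_div_sq hθsum _) (fun k => ?_) hP]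
  · simp only [hfactor, logNormSqProd]
  · rw [← normSq_pos, hfactor]
    have := hθ k
    positivity

theorem hasDerivAt_logNormSqProd {θ : ℕ → ℝ} (hθ : ∀ k, θ k ≠ 0)
    (hθsum : Summable fun k => 1 / θ k ^ 2) {t v : ℝ} (hv : 0 < v)
    (hsa : ∀ ε > 0, Summable fun k => (ε + (θ k - t) ^ 2)⁻¹)
    (hsb : ∀ ε > 0, Summable fun k => (ε + (θ k + t) ^ 2)⁻¹) :
    HasDerivAt (logNormSqProd θ t)
      (stieltjesChain (fun k => (θ k - t) ^ 2) 0 v + stieltjesChain (fun k => (θ k + t) ^ 2) 0 v)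
      v := by
  refine hasDerivAt_tsum_log_mul_div (fun _ => sq_nonneg _) (fun _ => sq_nonneg _) hsa hsb
    (fun k => pow_ne_zero 4 (hθ k)) hv ?_
  simpa only [normSq_one_add_sq_div _ _ _ (hθ _), Real.sq_sqrt hv.le] using
    summable_log_normSq_one_add (summable_norm_div_sq hθsum (√v + t * I))

theorem E_inv_sq_completely_monotone_general
    (K : ℂ) (θ : ℕ → ℝ) (hθ : ∀ k, 0 < θ k)
    (hθsum : Summable fun k => 1 / (θ k) ^ 2)
    (E : ℂ → ℂ)
    (hE : ∀ s : ℂ, HasProd (fun k : ℕ => 1 + (s / (θ k : ℂ)) ^ 2) (E s / K))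
    (t : ℝ) :
    ∀ j : ℕ, ∀ v : ℝ, 0 < v →
      0 ≤ (-1 : ℝ) ^ j *
        iteratedDeriv j
          (fun v : ℝ => (‖E (↑(Real.sqrt v) + ↑t * Complex.I)‖ ^ 2)⁻¹) v := by
  have hθ₀ (k : ℕ) : θ k ≠ 0 := (hθ k).ne'
  have hsa (ε : ℝ) (hε : ε > 0) : Summable fun k => (ε + (θ k - t) ^ 2)⁻¹ := by
    simpa [sub_eq_add_neg] using summable_inv_add_add_sq hθ₀ hθsum (-t) hε
  have hsb (ε : ℝ) (hε : ε > 0) : Summable fun k => (ε + (θ k + t) ^ 2)⁻¹ :=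
    summable_inv_add_add_sq hθ₀ hθsum t hε
  have hS {v : ℝ} (hv : 0 < v) :
      normSq (E (√v + t * I) / K) = Real.exp (logNormSqProd θ t v) :=
    normSq_eq_exp_logNormSqProd hθ₀ hθsum hv (hE _)
  have hK : K ≠ 0 := by
    rintro rfl
    exact (Real.exp_pos _).ne (by simpa using hS one_pos)
  intro j v hv
  refine neg_one_pow_mul_iteratedDeriv_nonneg_of_eqOn_exp_neg isOpen_Ioi
    ((isCompletelyMonotoneChain_stieltjesChain (fun _ => sq_nonneg _) hsa).add
      (isCompletelyMonotoneChain_stieltjesChain (fun _ => sq_nonneg _) hsb))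
    (inv_nonneg.2 (normSq_nonneg K)) (fun w hw => hasDerivAt_logNormSqProd hθ₀ hθsum hw hsa hsb)
    (fun w hw => ?_) j hv
  dsimp only
  rw [Complex.sq_norm, ← div_mul_cancel₀ (E (√w + t * I)) hK, map_mul, hS hw, Real.exp_neg]
  field_simp

theorem E_inv_sq_completely_monotone
    (K : ℂ) (hK : K ≠ 0) (θ : ℕ → ℝ) (hθ : ∀ k, 0 < θ k)
    (hθsum : Summable fun k => 1 / (θ k) ^ 2)
    (E : ℂ → ℂ)
    (hE : ∀ s : ℂ, HasProd (fun k : ℕ => 1 + (s / (θ k : ℂ)) ^ 2) (E s / K))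
    (t : ℝ) (hne : ∀ x : ℝ, 0 < x → E (↑x + ↑t * Complex.I) ≠ 0) :
    ∀ j : ℕ, ∀ v : ℝ, 0 < v →
      0 ≤ (-1 : ℝ) ^ j *
        iteratedDeriv j
          (fun v : ℝ => (‖E (↑(Real.sqrt v) + ↑t * Complex.I)‖ ^ 2)⁻¹) v :=
  E_inv_sq_completely_monotone_general K θ hθ hθsum E hE t
end

section
/- Define m(r, δ) := sup{ 1/(2|ξ(1/2 + s)|) : Re(s) ≥ r, |Im(s)| ≤ δ } where ξ is the Riemann xi function. Then m(r, δ) → 0 as r → ∞, for each fixed δ ≥ 0; indeed for r > σ₀ − 1/2 (with σ₀ the root of ζ(σ)=2 on (1,∞)), m(r, δ) ≤ (2 − ζ(1/2 + r))^{−1} · (inf{|a(1/2+s)| : Re(s) ≥ r, |Im(s)| ≤ δ})^{−1}. -/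
open Complex Filter Topology

noncomputable def zetaReal (σ : ℝ) : ℝ := ∑' n : ℕ, 1 / ((n : ℝ) + 1) ^ σ

noncomputable def aFun (s : ℂ) : ℂ :=
  (Real.pi : ℂ) ^ (-s / 2) * 2 * Complex.Gamma (1 + s / 2) * (s - 1)

noncomputable def xi (s : ℂ) : ℂ := (1 / 2) * aFun s * riemannZeta s

noncomputable def mBound (r δ : ℝ) : ℝ :=
  sSup {y : ℝ | ∃ s : ℂ, r ≤ s.re ∧ |s.im| ≤ δ ∧ y = 1 / (2 * ‖xi (1 / 2 + s)‖)}

/-!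
For `Re u > 1` the Dirichlet series gives `‖ζ u‖ ≥ 1 - ∑_{n ≥ 2} n ^ (-Re u) = 2 - ζ(Re u)`, which
is positive and increasing in `Re u` beyond `σ₀`. On a horizontal half-strip, `‖Γ z‖ ≥ c π ^ Re z`:
this holds on a compact box by continuity and propagates to the right through
`Γ z = (z - 1) Γ (z - 1)`. This growth cancels the factor `π ^ (-u / 2)` of `a u` exactly, so
`‖a u‖ ≥ K (Re u - 1)`, and `1 / (2 ‖ξ (1/2 + s)‖) = 1 / (‖a‖ ‖ζ‖)` is `O(1 / r)`.
-/

lemma summable_one_div_nat_add_one_rpow {σ : ℝ} (hσ : 1 < σ) :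
    Summable fun n : ℕ => 1 / ((n : ℝ) + 1) ^ σ := by
  simpa using (summable_nat_add_iff 1).mpr (Real.summable_one_div_nat_rpow.mpr hσ)

lemma zetaReal_strictAntiOn : StrictAntiOn zetaReal (Set.Ioi 1) := by
  intro σ hσ τ _ hστ
  refine Summable.tsum_lt_tsum_of_nonneg (i := 1) (fun n => by positivity) (fun n => ?_) ?_
    (summable_one_div_nat_add_one_rpow hσ)
  · exact one_div_le_one_div_of_le (by positivity)
      (Real.rpow_le_rpow_of_exponent_le (by simp) hστ.le)
  · norm_num
    exact inv_strictAnti₀ (by positivity) (Real.rpow_lt_rpow_of_exponent_lt one_lt_two hστ)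

lemma two_mul_norm_sub_tsum_norm_le_norm_tsum {E : Type*} [NormedAddCommGroup E]
    [CompleteSpace E] {f : ℕ → E} (hf : Summable fun n => ‖f n‖) :
    2 * ‖f 0‖ - ∑' n, ‖f n‖ ≤ ‖∑' n, f n‖ := by
  rw [hf.of_norm.tsum_eq_zero_add, hf.tsum_eq_zero_add]
  have htail : ‖∑' n, f (n + 1)‖ ≤ ∑' n, ‖f (n + 1)‖ :=
    norm_tsum_le_tsum_norm ((summable_nat_add_iff 1).mpr hf)
  have := norm_sub_le (f 0 + ∑' n, f (n + 1)) (∑' n, f (n + 1))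
  rw [add_sub_cancel_right] at this
  linarith

lemma norm_one_div_nat_add_one_cpow (n : ℕ) (u : ℂ) :
    ‖1 / ((n : ℂ) + 1) ^ u‖ = 1 / ((n : ℝ) + 1) ^ u.re := by
  rw [norm_div, norm_one, ← norm_cpow_eq_rpow_re_of_pos (by positivity)]
  push_cast
  rfl

lemma two_sub_zetaReal_le_norm_riemannZeta {u : ℂ} (hu : 1 < u.re) :
    2 - zetaReal u.re ≤ ‖riemannZeta u‖ := by
  have h := two_mul_norm_sub_tsum_norm_le_norm_tsum (f := fun n : ℕ => 1 / ((n : ℂ) + 1) ^ u)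
    (by simpa only [norm_one_div_nat_add_one_cpow] using summable_one_div_nat_add_one_rpow hu)
  simp only [norm_one_div_nat_add_one_cpow, ← zeta_eq_tsum_one_div_nat_add_one_cpow hu] at h
  simpa [zetaReal] using h

lemma two_sub_zetaReal_le_norm_riemannZeta_of_le {σ : ℝ} {u : ℂ} (hσ : 1 < σ) (hu : σ ≤ u.re) :
    2 - zetaReal σ ≤ ‖riemannZeta u‖ := by
  have := zetaReal_strictAntiOn.antitoneOn hσ (hσ.trans_le hu) hu
  linarith [two_sub_zetaReal_le_norm_riemannZeta (hσ.trans_le hu)]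


lemma Complex.continuousOn_Gamma_of_re_pos {K : Set ℂ} (hK : ∀ z ∈ K, 0 < z.re) :
    ContinuousOn Gamma K := by
  refine fun z hz => (differentiableAt_Gamma z fun m hm => ?_).continuousAt.continuousWithinAt
  have := hK z hz
  rw [hm, neg_re, natCast_re] at this
  linarith [m.cast_nonneg (α := ℝ)]

lemma Complex.exists_pos_mul_rpow_le_norm_Gamma {b : ℝ} (hb : 0 < b) (d : ℝ) :
    ∃ c > 0, ∀ z : ℂ, 1 ≤ z.re → |z.im| ≤ d → c * b ^ z.re ≤ ‖Gamma z‖ := by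
  set K := Set.Icc 1 (b + 2) ×ℂ Set.Icc (-d) d
  have hKre : ∀ z ∈ K, 1 ≤ z.re := fun z hz => hz.1.1
  obtain ⟨c, hc, hcK⟩ := (isCompact_Icc.reProdIm isCompact_Icc).exists_forall_le' (a := 0)
    (f := fun z => ‖Gamma z‖ / b ^ z.re)
    (((continuousOn_Gamma_of_re_pos fun z hz => by linarith [hKre z hz]).norm).div
      (continuous_const.rpow continuous_re fun _ => Or.inl hb.ne').continuousOn
      fun z _ => (Real.rpow_pos_of_pos hb _).ne')
    fun z hz => div_pos (norm_pos_iff.mpr (Gamma_ne_zero_of_re_pos (by linarith [hKre z hz])))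
      (Real.rpow_pos_of_pos hb _)
  refine ⟨c, hc, fun z hz₁ hz₂ => ?_⟩
  -- Right of the box `re z - 1 ≥ b + 1`, so `Γ z = (z - 1) Γ (z - 1)` gains a factor `≥ b`.
  suffices h : ∀ n : ℕ, ∀ z : ℂ, 1 ≤ z.re → z.re ≤ b + 2 + n → |z.im| ≤ d →
      c * b ^ z.re ≤ ‖Gamma z‖ by
    obtain ⟨n, hn⟩ := exists_nat_ge z.re
    exact h n z hz₁ (by linarith) hz₂
  intro n
  induction n with
  | zero =>
    intro z h₁ h₂ h₃
    have := hcK z ⟨⟨h₁, by simpa using h₂⟩, abs_le.mp h₃⟩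
    rwa [le_div_iff₀ (Real.rpow_pos_of_pos hb _)] at this
  | succ n ih =>
    intro z h₁ h₂ h₃
    rcases le_or_gt z.re (b + 2 + n) with h | h
    · exact ih z h₁ h h₃
    have hprev := ih (z - 1) (by simp; linarith) (by push_cast at h₂; simp; linarith) (by simpa)
    have hz : Gamma z = (z - 1) * Gamma (z - 1) := by
      have hne : z - 1 ≠ 0 := fun h0 => by
        have := congrArg re h0
        simp at this
        linarith
      simpa using Gamma_add_one (z - 1) hne
    have hb' : b ≤ ‖z - 1‖ := by
      calc b ≤ (z - 1).re := by simp; linarith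
        _ ≤ ‖z - 1‖ := re_le_norm _
    calc c * b ^ z.re = b * (c * b ^ (z - 1).re) := by
          rw [sub_re, one_re, Real.rpow_sub_one hb.ne']; field_simp
      _ ≤ ‖z - 1‖ * ‖Gamma (z - 1)‖ := by gcongr
      _ = ‖Gamma z‖ := by rw [hz, norm_mul]

lemma exists_pos_mul_re_sub_one_le_norm_aFun (d : ℝ) :
    ∃ K > 0, ∀ u : ℂ, 0 ≤ u.re → |u.im| ≤ d → K * (u.re - 1) ≤ ‖aFun u‖ := by
  obtain ⟨c, hc, hΓ⟩ := Complex.exists_pos_mul_rpow_le_norm_Gamma Real.pi_pos (d / 2)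
  refine ⟨2 * c * Real.pi, by positivity, fun u hu₁ hu₂ => ?_⟩
  have hΓu := hΓ (1 + u / 2) (by simp; linarith) (by simp [abs_div]; linarith)
  have hnorm : ‖aFun u‖ = Real.pi ^ (-u.re / 2) * 2 * ‖Gamma (1 + u / 2)‖ * ‖u - 1‖ := by
    simp [aFun, norm_cpow_eq_rpow_re_of_pos Real.pi_pos]
  have hπ : Real.pi ^ (-u.re / 2) * Real.pi ^ (1 + u.re / 2) = Real.pi := by
    rw [← Real.rpow_add Real.pi_pos, show -u.re / 2 + (1 + u.re / 2) = 1 by ring, Real.rpow_one]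
  calc 2 * c * Real.pi * (u.re - 1) ≤ 2 * c * Real.pi * ‖u - 1‖ := by
        gcongr
        simpa using re_le_norm (u - 1)
    _ = Real.pi ^ (-u.re / 2) * 2 * (c * Real.pi ^ (1 + u / 2).re) * ‖u - 1‖ := by
        rw [show (1 + u / 2).re = 1 + u.re / 2 by simp]
        linear_combination (-2 * c * ‖u - 1‖) * hπ
    _ ≤ ‖aFun u‖ := by
        rw [hnorm]
        gcongr

lemma mBound_le_inv_mul_inv {r δ Z A : ℝ} (hZ : 0 < Z) (hA : 0 < A)
    (hζ : ∀ s : ℂ, r ≤ s.re → |s.im| ≤ δ → Z ≤ ‖riemannZeta (1 / 2 + s)‖)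
    (ha : ∀ s : ℂ, r ≤ s.re → |s.im| ≤ δ → A ≤ ‖aFun (1 / 2 + s)‖) :
    mBound r δ ≤ Z⁻¹ * A⁻¹ := by
  refine Real.sSup_le ?_ (by positivity)
  rintro _ ⟨s, hre, him, rfl⟩
  have hxi : 2 * ‖xi (1 / 2 + s)‖ = ‖riemannZeta (1 / 2 + s)‖ * ‖aFun (1 / 2 + s)‖ := by
    simp [xi]
    ring
  rw [hxi, one_div, mul_inv]
  gcongr
  exacts [hζ s hre him, ha s hre him]
theorem mBound_tendsto_zero (δ : ℝ) (hδ : 0 ≤ δ)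
    (σ₀ : ℝ) (hσ₀ : 1 < σ₀ ∧ zetaReal σ₀ = 2) :
    Tendsto (fun r => mBound r δ) atTop (nhds 0) ∧
    ∀ r : ℝ, σ₀ - 1 / 2 < r →
      mBound r δ ≤ (2 - zetaReal (1 / 2 + r))⁻¹ *
        (sInf {y : ℝ | ∃ s : ℂ, r ≤ s.re ∧ |s.im| ≤ δ ∧ y = ‖aFun (1 / 2 + s)‖})⁻¹ := by
  obtain ⟨hσ₀, hζσ₀⟩ := hσ₀
  obtain ⟨K, hK, haK⟩ := exists_pos_mul_re_sub_one_le_norm_aFun δ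
  have ha {r : ℝ} {s : ℂ} (hr : -1 / 2 ≤ r) (hs : r ≤ s.re) (hs' : |s.im| ≤ δ) :
      K * (r - 1 / 2) ≤ ‖aFun (1 / 2 + s)‖ := by
    calc K * (r - 1 / 2) ≤ K * ((1 / 2 + s).re - 1) :=
          mul_le_mul_of_nonneg_left (by simp; linarith) hK.le
      _ ≤ ‖aFun (1 / 2 + s)‖ := haK _ (by simp; linarith) (by simpa using hs')
  have hζ {r : ℝ} {s : ℂ} (hr : σ₀ - 1 / 2 < r) (hs : r ≤ s.re) :
      2 - zetaReal (1 / 2 + r) ≤ ‖riemannZeta (1 / 2 + s)‖ :=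
    two_sub_zetaReal_le_norm_riemannZeta_of_le (by linarith) (by simp; linarith)
  have hZ {r : ℝ} (hr : σ₀ - 1 / 2 < r) : 0 < 2 - zetaReal (1 / 2 + r) := by
    have : 1 / 2 + r ∈ Set.Ioi 1 := by simp only [Set.mem_Ioi]; linarith
    linarith [zetaReal_strictAntiOn hσ₀ this (by linarith : σ₀ < 1 / 2 + r)]
  refine ⟨?_, fun r hr => ?_⟩
  · refine tendsto_of_tendsto_of_tendsto_of_le_of_le' tendsto_const_nhds
      (h := fun r => (2 - zetaReal (1 / 2 + σ₀))⁻¹ * (K * (r - 1 / 2))⁻¹) ?_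
      (Eventually.of_forall fun r => Real.sSup_nonneg fun y ⟨s, _, _, hy⟩ => hy ▸ by positivity)
      ?_
    · have hlin : Tendsto (fun r : ℝ => K * (r - 1 / 2)) atTop atTop :=
        (tendsto_atTop_add_const_right _ (-(1 / 2)) tendsto_id).const_mul_atTop hK
      simpa using hlin.inv_tendsto_atTop.const_mul (2 - zetaReal (1 / 2 + σ₀))⁻¹
    · filter_upwards [eventually_ge_atTop σ₀] with r hr
      exact mBound_le_inv_mul_inv (hZ (by linarith)) (mul_pos hK (by linarith))
        (fun s hs _ => hζ (r := σ₀) (by linarith) (hr.trans hs))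
        (fun s hs hs' => ha (by linarith) hs hs')
  · refine mBound_le_inv_mul_inv (hZ hr) ?_ (fun s hs _ => hζ hr hs)
      fun s hs hs' => csInf_le ⟨0, fun y ⟨_, _, _, hy⟩ => hy ▸ norm_nonneg _⟩ ⟨s, hs, hs', rfl⟩
    refine (mul_pos hK (by linarith : 0 < r - 1 / 2)).trans_le
      (le_csInf ⟨_, r, by simp, by simpa, rfl⟩
        fun _ ⟨s, hs, hs', hy⟩ => hy ▸ ha (by linarith) hs hs')
end
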